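/- Under the harmonic map equation and the Liouville equation ψ_{u\bar u} = (1/2) e^ψ on the target, the function φ defined by e^φ = e^{ψ∘h} h_z \bar h_{\bar z} satisfies φ_{z\bar z} = (1/2) e^{ψ∘h} (|h_z|² − |h_{\bar z}|²). -/

import Mathlib

open Complex ComplexConjugate

/-- Wirtinger derivative ∂/∂z. -/
noncomputable def wd (f : ℂ → ℂ) (z : ℂ) : ℂ :=
  (1/2 : ℂ) * (fderiv ℝ f z 1 - Complex.I * fderiv ℝ f z Complex.I)

/-- Wirtinger derivative ∂/∂z̄. -/
noncomputable def wdb (f : ℂ → ℂ) (z : ℂ) : ℂ :=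
  (1/2 : ℂ) * (fderiv ℝ f z 1 + Complex.I * fderiv ℝ f z Complex.I)

section API

lemma clm_decomp (L : ℂ →L[ℝ] ℂ) (v : ℂ) :
    L v = (1/2 : ℂ) * (L 1 - Complex.I * L Complex.I) * v
        + (1/2 : ℂ) * (L 1 + Complex.I * L Complex.I) * (conj v) := by
  have hv3 : v = (v.re:ℂ) + (v.im:ℂ) * Complex.I := (Complex.re_add_im v).symm
  have hcv : (conj v : ℂ) = (v.re:ℂ) - (v.im:ℂ) * Complex.I := by
    apply Complex.ext <;> simp
  have h1 : L v = (v.re:ℂ) * L 1 + (v.im:ℂ) * L Complex.I := by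
    conv_lhs => rw [show v = v.re • (1:ℂ) + v.im • Complex.I by
      simp [Complex.real_smul, Complex.re_add_im]]
    rw [map_add, map_smul, map_smul]
    simp [Complex.real_smul]
  have hI : Complex.I * Complex.I = -1 := Complex.I_mul_I
  linear_combination h1 - (1/2:ℂ)*(L 1 - Complex.I*L Complex.I)*hv3
    - (1/2:ℂ)*(L 1 + Complex.I*L Complex.I)*hcv + ((v.im:ℂ)*L Complex.I)*hI

variable {f g : ℂ → ℂ} {z : ℂ}

lemma wd_fd {L : ℂ →L[ℝ] ℂ} (hf : HasFDerivAt f L z) :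
    wd f z = (1/2 : ℂ) * (L 1 - Complex.I * L Complex.I) := by
  rw [wd, hf.fderiv]

lemma wdb_fd {L : ℂ →L[ℝ] ℂ} (hf : HasFDerivAt f L z) :
    wdb f z = (1/2 : ℂ) * (L 1 + Complex.I * L Complex.I) := by
  rw [wdb, hf.fderiv]

lemma wd_congr (hfg : f =ᶠ[nhds z] g) : wd f z = wd g z := by
  rw [wd, wd, hfg.fderiv_eq]

lemma wdb_congr (hfg : f =ᶠ[nhds z] g) : wdb f z = wdb g z := by
  rw [wdb, wdb, hfg.fderiv_eq]

lemma wd_add (hf : DifferentiableAt ℝ f z) (hg : DifferentiableAt ℝ g z) :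
    wd (fun w => f w + g w) z = wd f z + wd g z := by
  rw [wd_fd ((hf.hasFDerivAt).fun_add (hg.hasFDerivAt)), wd, wd, hf.hasFDerivAt.fderiv,
    hg.hasFDerivAt.fderiv]
  simp; ring

lemma wdb_add (hf : DifferentiableAt ℝ f z) (hg : DifferentiableAt ℝ g z) :
    wdb (fun w => f w + g w) z = wdb f z + wdb g z := by
  rw [wdb_fd ((hf.hasFDerivAt).fun_add (hg.hasFDerivAt)), wdb, wdb, hf.hasFDerivAt.fderiv,
    hg.hasFDerivAt.fderiv]
  simp; ring

lemma wd_mul (hf : DifferentiableAt ℝ f z) (hg : DifferentiableAt ℝ g z) :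
    wd (fun w => f w * g w) z = wd f z * g z + f z * wd g z := by
  rw [wd_fd ((hf.hasFDerivAt).fun_mul (hg.hasFDerivAt)), wd, wd, hf.hasFDerivAt.fderiv,
    hg.hasFDerivAt.fderiv]
  simp [smul_eq_mul]; ring

lemma wdb_mul (hf : DifferentiableAt ℝ f z) (hg : DifferentiableAt ℝ g z) :
    wdb (fun w => f w * g w) z = wdb f z * g z + f z * wdb g z := by
  rw [wdb_fd ((hf.hasFDerivAt).fun_mul (hg.hasFDerivAt)), wdb, wdb, hf.hasFDerivAt.fderiv,
    hg.hasFDerivAt.fderiv]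
  simp [smul_eq_mul]; ring

lemma conj_half_expand (x y : ℂ) :
    conj ((1/2 : ℂ) * (x + Complex.I * y)) =
      (1/2 : ℂ) * (conj x - Complex.I * conj y) := by
  simp [map_mul, map_add, map_div₀, Complex.conj_I, map_ofNat]; try ring

lemma conj_half_expand' (x y : ℂ) :
    conj ((1/2 : ℂ) * (x - Complex.I * y)) =
      (1/2 : ℂ) * (conj x + Complex.I * conj y) := by
  simp [map_mul, map_sub, map_div₀, Complex.conj_I, map_ofNat]; try ring

lemma wd_comp (hg : DifferentiableAt ℝ g (f z)) (hf : DifferentiableAt ℝ f z) :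
    wd (fun w => g (f w)) z
      = wd g (f z) * wd f z + wdb g (f z) * conj (wdb f z) := by
  have hc : HasFDerivAt (fun w => g (f w))
      ((fderiv ℝ g (f z)).comp (fderiv ℝ f z)) z := (hg.hasFDerivAt).comp z (hf.hasFDerivAt)
  set L := fderiv ℝ g (f z) with hL
  set M := fderiv ℝ f z with hM
  have e1 := clm_decomp L (M 1)
  have e2 := clm_decomp L (M Complex.I)
  rw [wd_fd hc, wd, wd, wdb, wdb, ← hL, ← hM]
  simp only [ContinuousLinearMap.comp_apply]
  rw [conj_half_expand (M 1) (M Complex.I)]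
  linear_combination (1/2 : ℂ)*e1 - (Complex.I/2)*e2

lemma wdb_comp (hg : DifferentiableAt ℝ g (f z)) (hf : DifferentiableAt ℝ f z) :
    wdb (fun w => g (f w)) z
      = wd g (f z) * wdb f z + wdb g (f z) * conj (wd f z) := by
  have hc : HasFDerivAt (fun w => g (f w))
      ((fderiv ℝ g (f z)).comp (fderiv ℝ f z)) z := (hg.hasFDerivAt).comp z (hf.hasFDerivAt)
  set L := fderiv ℝ g (f z) with hL
  set M := fderiv ℝ f z with hM
  have e1 := clm_decomp L (M 1)
  have e2 := clm_decomp L (M Complex.I)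
  rw [wdb_fd hc, wd, wd, wdb, wdb, ← hL, ← hM]
  simp only [ContinuousLinearMap.comp_apply]
  rw [conj_half_expand' (M 1) (M Complex.I)]
  linear_combination (1/2 : ℂ)*e1 + (Complex.I/2)*e2

lemma wd_conj (hf : DifferentiableAt ℝ f z) :
    wd (fun w => conj (f w)) z = conj (wdb f z) := by
  have hc : HasFDerivAt (fun w => conj (f w))
      ((Complex.conjCLE.toContinuousLinearMap).comp (fderiv ℝ f z)) z :=
    (Complex.conjCLE.toContinuousLinearMap.hasFDerivAt).comp z (hf.hasFDerivAt)
  rw [wd_fd hc, wdb, hf.hasFDerivAt.fderiv]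
  simp only [ContinuousLinearMap.comp_apply, ContinuousLinearEquiv.coe_coe]
  rw [conj_half_expand (fderiv ℝ f z 1) (fderiv ℝ f z Complex.I)]
  simp [Complex.conjCLE_apply]

lemma wdb_conj (hf : DifferentiableAt ℝ f z) :
    wdb (fun w => conj (f w)) z = conj (wd f z) := by
  have hc : HasFDerivAt (fun w => conj (f w))
      ((Complex.conjCLE.toContinuousLinearMap).comp (fderiv ℝ f z)) z :=
    (Complex.conjCLE.toContinuousLinearMap.hasFDerivAt).comp z (hf.hasFDerivAt)
  rw [wdb_fd hc, wd, hf.hasFDerivAt.fderiv]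
  simp only [ContinuousLinearMap.comp_apply, ContinuousLinearEquiv.coe_coe]
  rw [conj_half_expand' (fderiv ℝ f z 1) (fderiv ℝ f z Complex.I)]
  simp [Complex.conjCLE_apply]

lemma wd_hol {g' : ℂ} (hg : HasDerivAt g g' (f z)) (hf : DifferentiableAt ℝ f z) :
    wd (fun w => g (f w)) z = g' * wd f z := by
  have hc : HasFDerivAt (fun w => g (f w))
      (((ContinuousLinearMap.smulRight (1 : ℂ →L[ℂ] ℂ) g').restrictScalars ℝ).comp
        (fderiv ℝ f z)) z :=
    (hg.hasFDerivAt.restrictScalars ℝ).comp z (hf.hasFDerivAt)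
  rw [wd_fd hc, wd, hf.hasFDerivAt.fderiv]
  simp [ContinuousLinearMap.comp_apply, smul_eq_mul]
  ring

lemma wdb_hol {g' : ℂ} (hg : HasDerivAt g g' (f z)) (hf : DifferentiableAt ℝ f z) :
    wdb (fun w => g (f w)) z = g' * wdb f z := by
  have hc : HasFDerivAt (fun w => g (f w))
      (((ContinuousLinearMap.smulRight (1 : ℂ →L[ℂ] ℂ) g').restrictScalars ℝ).comp
        (fderiv ℝ f z)) z :=
    (hg.hasFDerivAt.restrictScalars ℝ).comp z (hf.hasFDerivAt)
  rw [wdb_fd hc, wdb, hf.hasFDerivAt.fderiv]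
  simp [ContinuousLinearMap.comp_apply, smul_eq_mul]
  ring

lemma wd_neg : wd (fun w => -f w) z = -wd f z := by
  rw [wd, wd, fderiv_fun_neg]; simp; ring

lemma wdb_neg : wdb (fun w => -f w) z = -wdb f z := by
  rw [wdb, wdb, fderiv_fun_neg]; simp; ring

end API

section API2
variable {f : ℂ → ℂ} {z : ℂ}

lemma contDiff_wd (hf : ContDiff ℝ (⊤ : ℕ∞) f) : ContDiff ℝ (⊤ : ℕ∞) (wd f) := by
  have h1 : ContDiff ℝ (⊤ : ℕ∞) (fderiv ℝ f) := hf.fderiv_right (by simp)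
  unfold wd
  exact contDiff_const.mul ((h1.clm_apply contDiff_const).sub
    (contDiff_const.mul (h1.clm_apply contDiff_const)))

lemma contDiff_wdb (hf : ContDiff ℝ (⊤ : ℕ∞) f) : ContDiff ℝ (⊤ : ℕ∞) (wdb f) := by
  have h1 : ContDiff ℝ (⊤ : ℕ∞) (fderiv ℝ f) := hf.fderiv_right (by simp)
  unfold wdb
  exact contDiff_const.mul ((h1.clm_apply contDiff_const).add
    (contDiff_const.mul (h1.clm_apply contDiff_const)))

lemma wdb_wd_comm (hf : ContDiff ℝ (⊤ : ℕ∞) f) (z : ℂ) : wdb (wd f) z = wd (wdb f) z := by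
  have hF : ContDiff ℝ (⊤ : ℕ∞) (fderiv ℝ f) := hf.fderiv_right (by simp)
  have hF' : HasFDerivAt (fderiv ℝ f) (fderiv ℝ (fderiv ℝ f) z) z :=
    (hF.differentiable (by simp) z).hasFDerivAt
  set F2 := fderiv ℝ (fderiv ℝ f) z with hF2
  have hsym : ∀ v w : ℂ, F2 v w = F2 w v :=
    second_derivative_symmetric (fun y => (hf.differentiable (by simp) y).hasFDerivAt) hF'
  have key : ∀ v : ℂ, HasFDerivAt (fun y => fderiv ℝ f y v) (F2.flip v) z := by
    intro v
    have h := hF'.clm_apply (hasFDerivAt_const v z)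
    simpa using h
  have hD : HasFDerivAt (wd f)
      ((1/2:ℂ) • (F2.flip 1 - Complex.I • F2.flip Complex.I)) z := by
    unfold wd
    exact ((key 1).sub (((key Complex.I).const_mul Complex.I))).const_mul (1/2:ℂ)
  have hD' : HasFDerivAt (wdb f)
      ((1/2:ℂ) • (F2.flip 1 + Complex.I • F2.flip Complex.I)) z := by
    unfold wdb
    exact ((key 1).add (((key Complex.I).const_mul Complex.I))).const_mul (1/2:ℂ)
  rw [wdb, wd, hD.fderiv, hD'.fderiv]
  simp only [ContinuousLinearMap.smul_apply, ContinuousLinearMap.sub_apply,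
    ContinuousLinearMap.add_apply, ContinuousLinearMap.flip_apply, smul_eq_mul]
  linear_combination (Complex.I/2) * hsym Complex.I 1

end API2


/-- under the harmonic map equation and the Liouville equation
`ψ_{u ū} = (1/2) e^ψ` on the target, the function `φ` with
`e^φ = e^{ψ∘h} h_z \bar h_{z̄}` satisfies
`φ_{z z̄} = (1/2) e^{ψ∘h} (|h_z|² − |h_{z̄}|²)`. -/
theorem phi_z_zbar_formula
    (U V : Set ℂ) (hU : IsOpen U) (hV : IsOpen V) (h φ : ℂ → ℂ) (ψ : ℂ → ℝ)
    (hmaps : Set.MapsTo h U V)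
    (hh : ContDiff ℝ (⊤ : ℕ∞) h) (hψ : ContDiff ℝ (⊤ : ℕ∞) ψ) (hφ : ContDiff ℝ (⊤ : ℕ∞) φ)
    (hzne : ∀ z ∈ U, wd h z ≠ 0)
    (harm : ∀ z ∈ U,
      wdb (wd h) z + wd (fun u => (ψ u : ℂ)) (h z) * wd h z * wdb h z = 0)
    (liouville : ∀ u ∈ V,
      wdb (wd (fun u => (ψ u : ℂ))) u = (1/2) * Complex.exp (ψ u))
    (hexp : ∀ z ∈ U,
      Complex.exp (φ z) = Complex.exp (ψ (h z)) * wd h z * conj (wd h z)) :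
    ∀ z ∈ U,
      wdb (wd φ) z = (1/2) * Complex.exp (ψ (h z)) *
        (wd h z * conj (wd h z) - wdb h z * conj (wdb h z)) := by
  have hΨc : ContDiff ℝ (⊤ : ℕ∞) (fun u => ((ψ u : ℝ) : ℂ)) :=
    Complex.ofRealCLM.contDiff.comp hψ
  have hp : ContDiff ℝ (⊤ : ℕ∞) (wd h) := contDiff_wd hh
  have hq : ContDiff ℝ (⊤ : ℕ∞) (wdb h) := contDiff_wdb hh
  have hr : ContDiff ℝ (⊤ : ℕ∞) (wd (wd h)) := contDiff_wd hp
  have hs : ContDiff ℝ (⊤ : ℕ∞) (wdb (wd h)) := contDiff_wdb hp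
  have hwdΨ : ContDiff ℝ (⊤ : ℕ∞) (wd (fun u => ((ψ u : ℝ) : ℂ))) := contDiff_wd hΨc
  have hwdbΨ : ContDiff ℝ (⊤ : ℕ∞) (wdb (fun u => ((ψ u : ℝ) : ℂ))) := contDiff_wdb hΨc
  have ha : ContDiff ℝ (⊤ : ℕ∞) (fun w => wd (fun u => ((ψ u : ℝ) : ℂ)) (h w)) := hwdΨ.comp hh
  have D : ∀ (g : ℂ → ℂ), ContDiff ℝ (⊤ : ℕ∞) g → ∀ x : ℂ, DifferentiableAt ℝ g x :=
    fun g hg x => hg.differentiable (by simp) x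
  have dconj : ∀ (g : ℂ → ℂ) (x : ℂ), DifferentiableAt ℝ g x →
      DifferentiableAt ℝ (fun w => conj (g w)) x := fun g x hg =>
    (Complex.conjCLE.toContinuousLinearMap.differentiableAt).comp x hg
  have hreal : ∀ u : ℂ, wdb (fun u => ((ψ u : ℝ) : ℂ)) u
      = conj (wd (fun u => ((ψ u : ℝ) : ℂ)) u) := by
    intro u
    have h1 : (fun w => conj (((ψ w : ℝ) : ℂ))) = (fun u => ((ψ u : ℝ) : ℂ)) := by
      funext w; exact Complex.conj_ofReal _
    rw [← wdb_conj (D _ hΨc u), h1]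
  have hAc : ContDiff ℝ (⊤ : ℕ∞) (fun x => Complex.exp ((ψ (h x) : ℝ) : ℂ)) :=
    Complex.contDiff_exp.comp (hΨc.comp hh)
  have claim1 : ∀ w ∈ U, wd φ w =
      wd (fun u => ((ψ u : ℝ) : ℂ)) (h w) * wd h w
        + conj (wd (fun u => ((ψ u : ℝ) : ℂ)) (h w)) * conj (wdb h w)
        + wd (wd h) w * (wd h w)⁻¹
        + conj (wdb (wd h) w) * (conj (wd h w))⁻¹ := by
    intro w hw
    have hne : wd h w ≠ 0 := hzne w hw
    have hcne : conj (wd h w) ≠ 0 := star_ne_zero.mpr hne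
    have hAne : Complex.exp ((ψ (h w) : ℝ) : ℂ) ≠ 0 := Complex.exp_ne_zero _
    have hEG : (fun x => Complex.exp (φ x)) =ᶠ[nhds w]
        (fun x => Complex.exp ((ψ (h x) : ℝ) : ℂ) * wd h x * conj (wd h x)) :=
      Filter.eventuallyEq_of_mem (hU.mem_nhds hw) hexp
    have hE : wd (fun x => Complex.exp (φ x)) w = Complex.exp (φ w) * wd φ w :=
      wd_hol (Complex.hasDerivAt_exp (φ w)) (D _ hφ w)
    have hΨh : wd (fun x => ((ψ (h x) : ℝ) : ℂ)) w
        = wd (fun u => ((ψ u : ℝ) : ℂ)) (h w) * wd h w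
          + wdb (fun u => ((ψ u : ℝ) : ℂ)) (h w) * conj (wdb h w) :=
      wd_comp (D _ hΨc (h w)) (D _ hh w)
    have hA : wd (fun x => Complex.exp ((ψ (h x) : ℝ) : ℂ)) w
        = Complex.exp ((ψ (h w) : ℝ) : ℂ) * wd (fun x => ((ψ (h x) : ℝ) : ℂ)) w :=
      wd_hol (Complex.hasDerivAt_exp _) (D _ (hΨc.comp hh) w)
    have hG1 : wd (fun x => Complex.exp ((ψ (h x) : ℝ) : ℂ) * wd h x) w
        = wd (fun x => Complex.exp ((ψ (h x) : ℝ) : ℂ)) w * wd h w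
          + Complex.exp ((ψ (h w) : ℝ) : ℂ) * wd (wd h) w :=
      wd_mul (D _ hAc w) (D _ hp w)
    have hCP : wd (fun x => conj (wd h x)) w = conj (wdb (wd h) w) :=
      wd_conj (D _ hp w)
    have hG : wd (fun x => Complex.exp ((ψ (h x) : ℝ) : ℂ) * wd h x * conj (wd h x)) w
        = wd (fun x => Complex.exp ((ψ (h x) : ℝ) : ℂ) * wd h x) w * conj (wd h w)
          + Complex.exp ((ψ (h w) : ℝ) : ℂ) * wd h w * wd (fun x => conj (wd h x)) w :=
      wd_mul ((D _ hAc w).mul (D _ hp w)) (dconj _ w (D _ hp w))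
    have hkey : Complex.exp (φ w) * wd φ w
        = wd (fun x => Complex.exp ((ψ (h x) : ℝ) : ℂ) * wd h x * conj (wd h x)) w := by
      rw [← hE]; exact wd_congr hEG
    rw [hexp w hw, hG, hG1, hA, hΨh, hCP, hreal] at hkey
    have hGne : Complex.exp ((ψ (h w) : ℝ) : ℂ) * wd h w * conj (wd h w) ≠ 0 :=
      mul_ne_zero (mul_ne_zero hAne hne) hcne
    apply mul_left_cancel₀ hGne
    rw [hkey]
    field_simp
  intro z hz
  have hne : wd h z ≠ 0 := hzne z hz
  have hcne : conj (wd h z) ≠ 0 := star_ne_zero.mpr hne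
  have hL := liouville (h z) (hmaps hz)
  have hcE : conj (Complex.exp ((ψ (h z) : ℝ) : ℂ)) = Complex.exp ((ψ (h z) : ℝ) : ℂ) := by
    rw [← Complex.ofReal_exp]; exact Complex.conj_ofReal _
  have hSev : wd φ =ᶠ[nhds z]
      (fun w => wd (fun u => ((ψ u : ℝ) : ℂ)) (h w) * wd h w + conj (wd (fun u => ((ψ u : ℝ) : ℂ)) (h w)) * conj (wdb h w) + wd (wd h) w * (wd h w)⁻¹ + conj (wdb (wd h) w) * (conj (wd h w))⁻¹) :=
    Filter.eventuallyEq_of_mem (hU.mem_nhds hz) claim1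
  rw [wdb_congr hSev]
  have hsid : ∀ w ∈ U, wdb (wd h) w = -(wd (fun u => ((ψ u : ℝ) : ℂ)) (h w) * wd h w * wdb h w) :=
    fun w hw => by linear_combination harm w hw
  have hsev : wdb (wd h) =ᶠ[nhds z]
      (fun w => -(wd (fun u => ((ψ u : ℝ) : ℂ)) (h w) * wd h w * wdb h w)) :=
    Filter.eventuallyEq_of_mem (hU.mem_nhds hz) hsid
  have e_qz : wd (wdb h) z = wdb (wd h) z := (wdb_wd_comm hh z).symm
  have e_wda : wd (fun w => wd (fun u => ((ψ u : ℝ) : ℂ)) (h w)) z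
      = wd (wd (fun u => ((ψ u : ℝ) : ℂ))) (h z) * wd h z + wdb (wd (fun u => ((ψ u : ℝ) : ℂ))) (h z) * conj (wdb h z) :=
    wd_comp (D _ hwdΨ (h z)) (D _ hh z)
  have e_wdba : wdb (fun w => wd (fun u => ((ψ u : ℝ) : ℂ)) (h w)) z
      = wd (wd (fun u => ((ψ u : ℝ) : ℂ))) (h z) * wdb h z + wdb (wd (fun u => ((ψ u : ℝ) : ℂ))) (h z) * conj (wd h z) :=
    wdb_comp (D _ hwdΨ (h z)) (D _ hh z)
  have e_N : wd (fun w => wd (fun u => ((ψ u : ℝ) : ℂ)) (h w) * wd h w * wdb h w) z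
      = (wd (fun w => wd (fun u => ((ψ u : ℝ) : ℂ)) (h w)) z * wd h z + wd (fun u => ((ψ u : ℝ) : ℂ)) (h z) * wd (wd h) z) * wdb h z
        + wd (fun u => ((ψ u : ℝ) : ℂ)) (h z) * wd h z * wd (wdb h) z := by
    rw [wd_mul ((D _ ha z).fun_mul (D _ hp z)) (D _ hq z), wd_mul (D _ ha z) (D _ hp z)]
  have e_wds : wd (wdb (wd h)) z
      = -((wd (fun w => wd (fun u => ((ψ u : ℝ) : ℂ)) (h w)) z * wd h z + wd (fun u => ((ψ u : ℝ) : ℂ)) (h z) * wd (wd h) z) * wdb h z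
          + wd (fun u => ((ψ u : ℝ) : ℂ)) (h z) * wd h z * wd (wdb h) z) := by
    calc wd (wdb (wd h)) z
        = wd (fun w => -(wd (fun u => ((ψ u : ℝ) : ℂ)) (h w) * wd h w * wdb h w)) z := wd_congr hsev
      _ = -(wd (fun w => wd (fun u => ((ψ u : ℝ) : ℂ)) (h w) * wd h w * wdb h w) z) := wd_neg
      _ = _ := by rw [e_N]
  have dT1 : DifferentiableAt ℝ (fun w => wd (fun u => ((ψ u : ℝ) : ℂ)) (h w) * wd h w) z := (D _ ha z).mul (D _ hp z)
  have dT2 : DifferentiableAt ℝ (fun w => conj (wd (fun u => ((ψ u : ℝ) : ℂ)) (h w)) * conj (wdb h w)) z :=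
    (dconj _ z (D _ ha z)).mul (dconj _ z (D _ hq z))
  have dT3 : DifferentiableAt ℝ (fun w => wd (wd h) w * (wd h w)⁻¹) z := (D _ hr z).mul ((D _ hp z).inv hne)
  have dT4 : DifferentiableAt ℝ (fun w => conj (wdb (wd h) w) * (conj (wd h w))⁻¹) z :=
    (dconj _ z (D _ hs z)).mul ((dconj _ z (D _ hp z)).inv hcne)
  have s3 : wdb (fun w => wd (fun u => ((ψ u : ℝ) : ℂ)) (h w) * wd h w + conj (wd (fun u => ((ψ u : ℝ) : ℂ)) (h w)) * conj (wdb h w)) z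
      = wdb (fun w => wd (fun u => ((ψ u : ℝ) : ℂ)) (h w) * wd h w) z + wdb (fun w => conj (wd (fun u => ((ψ u : ℝ) : ℂ)) (h w)) * conj (wdb h w)) z := wdb_add dT1 dT2
  have s2 : wdb (fun w => wd (fun u => ((ψ u : ℝ) : ℂ)) (h w) * wd h w + conj (wd (fun u => ((ψ u : ℝ) : ℂ)) (h w)) * conj (wdb h w) + wd (wd h) w * (wd h w)⁻¹) z
      = wdb (fun w => wd (fun u => ((ψ u : ℝ) : ℂ)) (h w) * wd h w + conj (wd (fun u => ((ψ u : ℝ) : ℂ)) (h w)) * conj (wdb h w)) z + wdb (fun w => wd (wd h) w * (wd h w)⁻¹) z := wdb_add (dT1.add dT2) dT3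
  have s1 : wdb (fun w => wd (fun u => ((ψ u : ℝ) : ℂ)) (h w) * wd h w + conj (wd (fun u => ((ψ u : ℝ) : ℂ)) (h w)) * conj (wdb h w) + wd (wd h) w * (wd h w)⁻¹ + conj (wdb (wd h) w) * (conj (wd h w))⁻¹) z
      = wdb (fun w => wd (fun u => ((ψ u : ℝ) : ℂ)) (h w) * wd h w + conj (wd (fun u => ((ψ u : ℝ) : ℂ)) (h w)) * conj (wdb h w) + wd (wd h) w * (wd h w)⁻¹) z + wdb (fun w => conj (wdb (wd h) w) * (conj (wd h w))⁻¹) z :=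
    wdb_add ((dT1.add dT2).add dT3) dT4
  have eT1 : wdb (fun w => wd (fun u => ((ψ u : ℝ) : ℂ)) (h w) * wd h w) z
      = wdb (fun w => wd (fun u => ((ψ u : ℝ) : ℂ)) (h w)) z * wd h z + wd (fun u => ((ψ u : ℝ) : ℂ)) (h z) * wdb (wd h) z :=
    wdb_mul (D _ ha z) (D _ hp z)
  have eT2 : wdb (fun w => conj (wd (fun u => ((ψ u : ℝ) : ℂ)) (h w)) * conj (wdb h w)) z
      = conj (wd (fun w => wd (fun u => ((ψ u : ℝ) : ℂ)) (h w)) z) * conj (wdb h z)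
        + conj (wd (fun u => ((ψ u : ℝ) : ℂ)) (h z)) * conj (wd (wdb h) z) := by
    rw [wdb_mul (dconj _ z (D _ ha z)) (dconj _ z (D _ hq z)),
      wdb_conj (D _ ha z), wdb_conj (D _ hq z)]
  have eT3 : wdb (fun w => wd (wd h) w * (wd h w)⁻¹) z
      = wd (wdb (wd h)) z * (wd h z)⁻¹
        + wd (wd h) z * (-(wd h z ^ 2)⁻¹ * wdb (wd h) z) := by
    rw [wdb_mul (D _ hr z) ((D _ hp z).fun_inv hne), wdb_wd_comm hp z,
      wdb_hol (f := wd h) (z := z) (hasDerivAt_inv hne) (D _ hp z)]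
  have eT4 : wdb (fun w => conj (wdb (wd h) w) * (conj (wd h w))⁻¹) z
      = conj (wd (wdb (wd h)) z) * (conj (wd h z))⁻¹
        + conj (wdb (wd h) z) * (-(conj (wd h z) ^ 2)⁻¹ * conj (wd (wd h) z)) := by
    rw [wdb_mul (dconj _ z (D _ hs z)) ((dconj _ z (D _ hp z)).fun_inv hcne),
      wdb_conj (D _ hs z),
      wdb_hol (f := fun w => conj (wd h w)) (z := z) (hasDerivAt_inv hcne)
        (dconj _ z (D _ hp z)),
      wdb_conj (D _ hp z)]
  rw [s1, s2, s3, eT1, eT2, eT3, eT4, e_wds, e_wdba, e_wda, e_qz, hL, hsid z hz]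
  simp only [map_add, map_mul, map_neg, Complex.conj_conj, hcE, map_div₀, map_one, map_ofNat]
  field_simp [hne, hcne]
  have hP : wd h z ^ 3 * ((wd h z)⁻¹) ^ 3 = 1 := by
    rw [inv_pow, mul_inv_cancel₀ (pow_ne_zero 3 hne)]
  have hCP : conj (wd h z) ^ 3 * ((conj (wd h z))⁻¹) ^ 3 = 1 := by
    rw [inv_pow, mul_inv_cancel₀ (pow_ne_zero 3 hcne)]
  linear_combination 0 * ((Complex.exp ((ψ (h z) : ℝ) : ℂ) * conj (wd h z) * wd h z -
      wdb h z * Complex.exp ((ψ (h z) : ℝ) : ℂ) * conj (wdb h z)) * hP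
    + (Complex.exp ((ψ (h z) : ℝ) : ℂ) * conj (wd h z) * wd h z -
      wdb h z * Complex.exp ((ψ (h z) : ℝ) : ℂ) * conj (wdb h z)) *
      (wd h z ^ 3 * ((wd h z)⁻¹) ^ 3) * hCP)
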